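/- Let (M₁,d₁),…,(Mₙ,dₙ) be ⋆-metric spaces for a fixed t-definer ⋆, and M = ∏ Mᵢ. Then d_max(x̄,ȳ) = maxᵢ dᵢ(xᵢ,yᵢ) and d_T(x̄,ȳ) = d₁(x₁,y₁) ⋆ ⋯ ⋆ dₙ(xₙ,yₙ) are both ⋆-metrics on M, and both induce the product topology of the ⋆-metric topologies on the Mᵢ. -/

import Mathlib

/-!
Balls of a `⋆`-metric form a basis of its topology: since `· ⋆ a` is continuous at `0` with value
`a`, a ball contains a ball around each of its points. So it suffices to compare neighbourhood
filters through their ball bases. A `d_max`-ball of radius `r` is the product of the coordinate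
balls of radius `r`, which gives the product filter. Moreover `d_max ≤ d_T`, and conversely `d_T`
is small as soon as all coordinates are small, by induction on `n` using monotonicity and
continuity of `⋆` at `0`. The triangle inequality for `d_T` is proved coordinatewise and then
regrouped by the interchange law `(a ⋆ b) ⋆ (c ⋆ e) = (a ⋆ c) ⋆ (b ⋆ e)`.
-/

open NNReal

def ballTopology {M : Type*} (d : M → M → ℝ≥0) : TopologicalSpace M :=
  TopologicalSpace.generateFrom {S | ∃ x r, 0 < r ∧ S = {y | d x y < r}}

open Filter Topology

namespace TDefiner

variable {f : ℝ≥0 → ℝ≥0 → ℝ≥0}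
  (hcomm : ∀ a b, f a b = f b a)
  (hassoc : ∀ a b c, f a (f b c) = f (f a b) c)
  (hmono : ∀ a b c, a ≤ b → f a c ≤ f b c)
  (hzero : ∀ a, f a 0 = a)
  (hcont : ∀ b, Continuous fun a => f a b)

include hcomm hmono in
theorem mono_right (a : ℝ≥0) {b c : ℝ≥0} (h : b ≤ c) : f a b ≤ f a c := by
  rw [hcomm a b, hcomm a c]
  exact hmono _ _ _ h

include hcomm hmono in
theorem mono {a b c e : ℝ≥0} (hab : a ≤ b) (hce : c ≤ e) : f a c ≤ f b e :=
  (hmono _ _ _ hab).trans (mono_right hcomm hmono _ hce)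

include hcomm hmono hzero in
theorem le_self_left (a b : ℝ≥0) : a ≤ f a b :=
  calc a = f a 0 := (hzero a).symm
    _ ≤ f a b := mono_right hcomm hmono a zero_le

include hcomm hassoc in
theorem interchange (a b c e : ℝ≥0) : f (f a b) (f c e) = f (f a c) (f b e) := by
  rw [← hassoc, ← hassoc, hassoc b, hcomm b c, ← hassoc]

include hcomm hzero hcont in
theorem exists_pos_lt {a r : ℝ≥0} (h : a < r) : ∃ s, 0 < s ∧ f s a < r := by
  have hlt : ∀ᶠ s in 𝓝[>] 0, f s a < r :=
    nhdsWithin_le_nhds (((hcont a).tendsto 0).eventually_lt_const (by rwa [hcomm, hzero]))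
  exact ((eventually_mem_nhdsWithin (s := Set.Ioi 0)).and hlt).exists

include hcomm hmono hzero in
theorem le_foldr_of_mem {l : List ℝ≥0} {a : ℝ≥0} (h : a ∈ l) : a ≤ l.foldr f 0 := by
  induction l with
  | nil => simp at h
  | cons b l ih =>
    rw [List.foldr_cons]
    rcases List.mem_cons.1 h with rfl | h
    · exact le_self_left hcomm hmono hzero _ _
    · exact (ih h).trans (hcomm b _ ▸ le_self_left hcomm hmono hzero _ _)

include hzero in
theorem foldr_eq_zero {l : List ℝ≥0} (h : ∀ a ∈ l, a = 0) : l.foldr f 0 = 0 := by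
  induction l with
  | nil => rfl
  | cons b l ih =>
    rw [List.foldr_cons, h b List.mem_cons_self,
      ih fun a ha => h a (List.mem_cons_of_mem _ ha), hzero]

include hcomm hmono in
theorem foldr_ofFn_mono {n : ℕ} {g h : Fin n → ℝ≥0} (hle : ∀ i, g i ≤ h i) :
    (List.ofFn g).foldr f 0 ≤ (List.ofFn h).foldr f 0 := by
  induction n with
  | zero => simp
  | succ m ih =>
    rw [List.ofFn_succ, List.ofFn_succ, List.foldr_cons, List.foldr_cons]
    exact mono hcomm hmono (hle 0) (ih fun i => hle i.succ)

include hcomm hassoc hzero in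
theorem foldr_ofFn_apply {n : ℕ} (g h : Fin n → ℝ≥0) :
    (List.ofFn fun i => f (g i) (h i)).foldr f 0 =
      f ((List.ofFn g).foldr f 0) ((List.ofFn h).foldr f 0) := by
  induction n with
  | zero => simp [hzero]
  | succ m ih =>
    rw [List.ofFn_succ, List.ofFn_succ (f := g), List.ofFn_succ (f := h),
      List.foldr_cons, List.foldr_cons, List.foldr_cons, ih, interchange hcomm hassoc]

include hcomm hmono hzero hcont in
theorem exists_pos_foldr_lt (n : ℕ) {r : ℝ≥0} (hr : 0 < r) :
    ∃ s, 0 < s ∧ ∀ g : Fin n → ℝ≥0, (∀ i, g i < s) → (List.ofFn g).foldr f 0 < r := by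
  induction n generalizing r with
  | zero => exact ⟨1, one_pos, fun g _ => by simpa using hr⟩
  | succ m ih =>
    obtain ⟨r', hr', hr'r⟩ := exists_between hr
    obtain ⟨t, ht, htr⟩ := exists_pos_lt hcomm hzero hcont hr'r
    obtain ⟨s, hs, hfold⟩ := ih hr'
    refine ⟨min t s, lt_min ht hs, fun g hg => ?_⟩
    rw [List.ofFn_succ, List.foldr_cons]
    calc f (g 0) ((List.ofFn fun i => g i.succ).foldr f 0)
        ≤ f t r' := mono hcomm hmono ((hg 0).trans_le (min_le_left _ _)).le
          (hfold _ fun i => (hg i.succ).trans_le (min_le_right _ _)).le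
      _ < r := htr

end TDefiner

namespace StarMetric

section BallTopology

variable {f : ℝ≥0 → ℝ≥0 → ℝ≥0}
  (hcomm : ∀ a b, f a b = f b a)
  (hmono : ∀ a b c, a ≤ b → f a c ≤ f b c)
  (hzero : ∀ a, f a 0 = a)
  (hcont : ∀ b, Continuous fun a => f a b)
  {M : Type*} {d : M → M → ℝ≥0}
  (hself : ∀ x, d x x = 0)
  (htri : ∀ x y z, d x y ≤ f (d x z) (d z y))

include hcomm hmono hzero hcont htri in
theorem exists_ball_subset_ball {z b : M} {r : ℝ≥0} (h : d z b < r) :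
    ∃ s, 0 < s ∧ {y | d b y < s} ⊆ {y | d z y < r} := by
  obtain ⟨s, hs, hsr⟩ := TDefiner.exists_pos_lt hcomm hzero hcont h
  refine ⟨s, hs, fun y (hy : d b y < s) => ?_⟩
  calc d z y ≤ f (d z b) (d b y) := htri z y b
    _ = f (d b y) (d z b) := hcomm _ _
    _ ≤ f s (d z b) := hmono _ _ _ hy.le
    _ < r := hsr

include hcomm hmono hzero hcont hself htri in
theorem isTopologicalBasis_ballTopology :
    @TopologicalSpace.IsTopologicalBasis M (ballTopology d)
      {S | ∃ x r, 0 < r ∧ S = {y | d x y < r}} := by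
  let := ballTopology d
  refine ⟨?_, Set.eq_univ_of_forall fun x => ⟨_, ⟨x, 1, one_pos, rfl⟩, by simp [hself]⟩, rfl⟩
  rintro _ ⟨z₁, r₁, -, rfl⟩ _ ⟨z₂, r₂, -, rfl⟩ b ⟨hb₁, hb₂⟩
  obtain ⟨s₁, hs₁, hsub₁⟩ := exists_ball_subset_ball hcomm hmono hzero hcont htri hb₁
  obtain ⟨s₂, hs₂, hsub₂⟩ := exists_ball_subset_ball hcomm hmono hzero hcont htri hb₂
  refine ⟨_, ⟨b, min s₁ s₂, lt_min hs₁ hs₂, rfl⟩, by simp [hself, hs₁, hs₂],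
    fun y (hy : d b y < min s₁ s₂) => ?_⟩
  exact ⟨hsub₁ (hy.trans_le (min_le_left _ _)), hsub₂ (hy.trans_le (min_le_right _ _))⟩

include hcomm hmono hzero hcont hself htri in
theorem hasBasis_nhds_ballTopology (x : M) :
    (@nhds M (ballTopology d) x).HasBasis (0 < ·) fun r => {y | d x y < r} := by
  let := ballTopology d
  refine ⟨fun t => ?_⟩
  rw [(isTopologicalBasis_ballTopology hcomm hmono hzero hcont hself htri).mem_nhds_iff]
  constructor
  · rintro ⟨_, ⟨z, r, -, rfl⟩, hx, hsub⟩
    obtain ⟨s, hs, hsub'⟩ := exists_ball_subset_ball hcomm hmono hzero hcont htri hx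
    exact ⟨s, hs, hsub'.trans hsub⟩
  · rintro ⟨r, hr, hsub⟩
    exact ⟨_, ⟨x, r, hr, rfl⟩, by simpa [hself] using hr, hsub⟩

end BallTopology

section Product

-- The paper's `d_max` and `d_T`.
def supDist {ι : Type*} [Fintype ι] {M : ι → Type*} (d : ∀ i, M i → M i → ℝ≥0)
    (x y : ∀ i, M i) : ℝ≥0 :=
  Finset.univ.sup fun i => d i (x i) (y i)

def foldDist (f : ℝ≥0 → ℝ≥0 → ℝ≥0) {n : ℕ} {M : Fin n → Type*} (d : ∀ i, M i → M i → ℝ≥0)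
    (x y : ∀ i, M i) : ℝ≥0 :=
  (List.ofFn fun i => d i (x i) (y i)).foldr f 0

variable {f : ℝ≥0 → ℝ≥0 → ℝ≥0}
  (hcomm : ∀ a b, f a b = f b a)
  (hassoc : ∀ a b c, f a (f b c) = f (f a b) c)
  (hmono : ∀ a b c, a ≤ b → f a c ≤ f b c)
  (hzero : ∀ a, f a 0 = a)
  (hcont : ∀ b, Continuous fun a => f a b)

section SupDist

variable {ι : Type*} [Fintype ι] {M : ι → Type*} {d : ∀ i, M i → M i → ℝ≥0}
  (hd0 : ∀ i x y, d i x y = 0 ↔ x = y)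
  (hself : ∀ i x, d i x x = 0)
  (hdsymm : ∀ i x y, d i x y = d i y x)
  (hdtri : ∀ i x y z, d i x y ≤ f (d i x z) (d i z y))

theorem le_supDist (x y : ∀ i, M i) (i : ι) : d i (x i) (y i) ≤ supDist d x y :=
  Finset.le_sup (f := fun j => d j (x j) (y j)) (Finset.mem_univ i)

theorem supDist_lt_iff {x y : ∀ i, M i} {r : ℝ≥0} (hr : 0 < r) :
    supDist d x y < r ↔ ∀ i, d i (x i) (y i) < r := by
  simp [supDist, Finset.sup_lt_iff hr]

include hd0 in
theorem supDist_eq_zero_iff {x y : ∀ i, M i} : supDist d x y = 0 ↔ x = y := by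
  rw [supDist, ← bot_eq_zero', Finset.sup_eq_bot_iff, funext_iff]
  simp only [Finset.mem_univ, true_imp_iff, bot_eq_zero', hd0]

include hself in
theorem supDist_self (x : ∀ i, M i) : supDist d x x = 0 := by
  simp [supDist, hself]

include hdsymm in
theorem supDist_comm (x y : ∀ i, M i) : supDist d x y = supDist d y x := by
  simp only [supDist, hdsymm]

include hcomm hmono hdtri in
theorem supDist_triangle (x y z : ∀ i, M i) :
    supDist d x y ≤ f (supDist d x z) (supDist d z y) :=
  Finset.sup_le fun i _ => (hdtri i _ _ (z i)).trans <|
    TDefiner.mono hcomm hmono (le_supDist x z i) (le_supDist z y i)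

include hcomm hmono hzero hcont hself hdtri in
theorem ballTopology_supDist :
    ballTopology (supDist d) = @Pi.topologicalSpace ι M fun i => ballTopology (d i) := by
  let := fun i => ballTopology (d i)
  have hbasis (i : ι) (x : M i) := hasBasis_nhds_ballTopology hcomm hmono hzero hcont
    (hself i) (hdtri i) x
  refine TopologicalSpace.ext_nhds fun x => ?_
  have hsup := hasBasis_nhds_ballTopology hcomm hmono hzero hcont (supDist_self hself)
    (supDist_triangle hcomm hmono hdtri) x
  rw [nhds_pi]
  refine le_antisymm (le_pi.2 fun i => (hsup.tendsto_iff (hbasis i (x i))).2 fun r hr =>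
    ⟨r, hr, fun y hy => (supDist_lt_iff hr).1 hy i⟩) (hsup.ge_iff.2 fun r hr => ?_)
  have hball : {y | supDist d x y < r} = Set.univ.pi fun i => {w | d i (x i) w < r} := by
    ext y
    simp [supDist_lt_iff hr]
  rw [hball]
  exact pi_mem_pi Set.finite_univ fun i _ => (hbasis i (x i)).mem_of_mem hr

end SupDist

section FoldDist

variable {n : ℕ} {M : Fin n → Type*} {d : ∀ i, M i → M i → ℝ≥0}
  (hd0 : ∀ i x y, d i x y = 0 ↔ x = y)
  (hself : ∀ i x, d i x x = 0)
  (hdsymm : ∀ i x y, d i x y = d i y x)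
  (hdtri : ∀ i x y z, d i x y ≤ f (d i x z) (d i z y))

include hcomm hmono hzero in
theorem le_foldDist (x y : ∀ i, M i) (i : Fin n) : d i (x i) (y i) ≤ foldDist f d x y :=
  TDefiner.le_foldr_of_mem hcomm hmono hzero (List.mem_ofFn.2 ⟨i, rfl⟩)

include hcomm hmono hzero in
theorem supDist_le_foldDist (x y : ∀ i, M i) : supDist d x y ≤ foldDist f d x y :=
  Finset.sup_le fun i _ => le_foldDist hcomm hmono hzero x y i

include hzero hself in
theorem foldDist_self (x : ∀ i, M i) : foldDist f d x x = 0 :=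
  TDefiner.foldr_eq_zero hzero fun a ha => by
    obtain ⟨i, rfl⟩ := List.mem_ofFn.1 ha
    exact hself i (x i)

include hcomm hmono hzero hd0 in
theorem foldDist_eq_zero_iff {x y : ∀ i, M i} : foldDist f d x y = 0 ↔ x = y := by
  refine ⟨fun h => funext fun i => (hd0 i _ _).1 ?_, ?_⟩
  · exact nonpos_iff_eq_zero.1 (h ▸ le_foldDist hcomm hmono hzero x y i)
  · rintro rfl
    exact foldDist_self hzero (fun i x => (hd0 i x x).2 rfl) x

include hdsymm in
theorem foldDist_comm (x y : ∀ i, M i) : foldDist f d x y = foldDist f d y x := by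
  simp only [foldDist, hdsymm]

include hcomm hassoc hmono hzero hdtri in
theorem foldDist_triangle (x y z : ∀ i, M i) :
    foldDist f d x y ≤ f (foldDist f d x z) (foldDist f d z y) :=
  calc foldDist f d x y
      ≤ (List.ofFn fun i => f (d i (x i) (z i)) (d i (z i) (y i))).foldr f 0 :=
        TDefiner.foldr_ofFn_mono hcomm hmono fun i => hdtri i _ _ (z i)
    _ = f (foldDist f d x z) (foldDist f d z y) :=
        TDefiner.foldr_ofFn_apply hcomm hassoc hzero _ _

include hcomm hassoc hmono hzero hcont hself hdtri in
theorem ballTopology_foldDist_eq_supDist :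
    ballTopology (foldDist f d) = ballTopology (supDist d) := by
  refine TopologicalSpace.ext_nhds fun x => ?_
  have hfold := hasBasis_nhds_ballTopology hcomm hmono hzero hcont (foldDist_self hzero hself)
    (foldDist_triangle hcomm hassoc hmono hzero hdtri) x
  have hsup := hasBasis_nhds_ballTopology hcomm hmono hzero hcont (supDist_self hself)
    (supDist_triangle hcomm hmono hdtri) x
  refine hfold.ext hsup (fun r hr => ?_)
    fun r hr => ⟨r, hr, fun y hy => (supDist_le_foldDist hcomm hmono hzero x y).trans_lt hy⟩
  obtain ⟨s, hs, hsmall⟩ := TDefiner.exists_pos_foldr_lt hcomm hmono hzero hcont n hr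
  exact ⟨s, hs, fun y hy => hsmall _ ((supDist_lt_iff hs).1 hy)⟩

end FoldDist

end Product

end StarMetric

/-- For a finite family of `⋆`-metric spaces, `d_max` and `d_T` are `⋆`-metrics
on the product, and both induce the product topology. -/
theorem product_starMetrics {n : ℕ} {M : Fin n → Type*}
    (f : ℝ≥0 → ℝ≥0 → ℝ≥0)
    (hcomm : ∀ a b, f a b = f b a)
    (hassoc : ∀ a b c, f a (f b c) = f (f a b) c)
    (hmono : ∀ a b c, a ≤ b → f a c ≤ f b c)
    (hzero : ∀ a, f a 0 = a)
    (hcont : ∀ b, Continuous fun a => f a b)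
    (d : ∀ i, M i → M i → ℝ≥0)
    (hd0 : ∀ i x y, d i x y = 0 ↔ x = y)
    (hdsymm : ∀ i x y, d i x y = d i y x)
    (hdtri : ∀ i x y z, d i x y ≤ f (d i x z) (d i z y)) :
    let dmax : (∀ i, M i) → (∀ i, M i) → ℝ≥0 :=
      fun x y => Finset.univ.sup fun i => d i (x i) (y i)
    let dT : (∀ i, M i) → (∀ i, M i) → ℝ≥0 :=
      fun x y => (List.ofFn fun i => d i (x i) (y i)).foldr f 0
    ((∀ x y, dmax x y = 0 ↔ x = y) ∧ (∀ x y, dmax x y = dmax y x) ∧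
      (∀ x y z, dmax x y ≤ f (dmax x z) (dmax z y))) ∧
    ((∀ x y, dT x y = 0 ↔ x = y) ∧ (∀ x y, dT x y = dT y x) ∧
      (∀ x y z, dT x y ≤ f (dT x z) (dT z y))) ∧
    ballTopology dmax = @Pi.topologicalSpace (Fin n) M (fun i => ballTopology (d i)) ∧
    ballTopology dT = @Pi.topologicalSpace (Fin n) M (fun i => ballTopology (d i)) := by
  have hself : ∀ i x, d i x x = 0 := fun i x => (hd0 i x x).2 rfl
  have hsup := StarMetric.ballTopology_supDist hcomm hmono hzero hcont hself hdtri
  have hfold :=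
    StarMetric.ballTopology_foldDist_eq_supDist hcomm hassoc hmono hzero hcont hself hdtri
  exact ⟨⟨fun _ _ => StarMetric.supDist_eq_zero_iff hd0, StarMetric.supDist_comm hdsymm,
      StarMetric.supDist_triangle hcomm hmono hdtri⟩,
    ⟨fun _ _ => StarMetric.foldDist_eq_zero_iff hcomm hmono hzero hd0,
      StarMetric.foldDist_comm hdsymm, StarMetric.foldDist_triangle hcomm hassoc hmono hzero hdtri⟩,
    hsup, hfold.trans hsup⟩
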